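/- Lemma 6.3: Suppose assumptions A1, A2, A3 hold and let (y_n, λ_n, s_n, γ_n) be the recursive construction of Theorem 6.1, with constants M2, M3 from Lemma 6.2 and M = max{M2, M3}. Define the integer sequence (P_k) by P_0 = P_1 = 1 and P_k = P_{k−1} + Σ_{i=1}^{k−1} P_i(P_{k−i} + P_{k−i−1}) for k ≥ 2. Then ‖h_n‖ ≤ M^{2n−2}·P_{n−1} for all n ≥ 2, and ‖y_n‖_{H²} ≤ M^{2n−1}·P_{n−1} for all n ≥ 1. -/

import Mathlib

open MeasureTheory Set Filter

noncomputable section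

/-- `Sol1D d lam g y y'` : C¹ solution on `[0,∞)` of `-y'' + d y - lam y = g`
(away from finitely many points) with `y'(0) = 0`. -/
def Sol1D (d : ℝ → ℝ) (lam : ℝ) (g : ℝ → ℝ) (y y' : ℝ → ℝ) : Prop :=
  (∀ x ∈ Set.Ici (0 : ℝ), HasDerivWithinAt y (y' x) (Set.Ici 0) x) ∧
  ContinuousOn y' (Set.Ici 0) ∧
  (∃ E : Finset ℝ, ∀ x ∈ Set.Ioi (0 : ℝ), x ∉ (E : Set ℝ) →
    HasDerivAt y' (d x * y x - lam * y x - g x) x) ∧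
  y' 0 = 0

/-- A bound state of `-d²/dx² + d(x)` on `(0,∞)` with Neumann condition at `0`. -/
def IsBoundState1D (d : ℝ → ℝ) (lam : ℝ) (y y' : ℝ → ℝ) : Prop :=
  Sol1D d lam (fun _ => 0) y y' ∧
  Filter.Tendsto y Filter.atTop (nhds 0) ∧
  ∃ x ∈ Set.Ici (0 : ℝ), y x ≠ 0

/-- Solution of the uncoupled inhomogeneous system
`-y'' + diag(D) y - lam y = g` with `y'(0) = 0` and decay at `+∞`. -/
def DiagBVPSol (D : ℝ → Fin 3 → ℝ) (lam : ℝ) (g : ℝ → Fin 3 → ℝ)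
    (y y' : ℝ → Fin 3 → ℝ) : Prop :=
  (∀ x ∈ Set.Ici (0 : ℝ), HasDerivWithinAt y (y' x) (Set.Ici 0) x) ∧
  ContinuousOn y' (Set.Ici 0) ∧
  (∃ E : Finset ℝ, ∀ x ∈ Set.Ioi (0 : ℝ), x ∉ (E : Set ℝ) →
    HasDerivAt y' (fun i => D x i * y x i - lam * y x i - g x i) x) ∧
  y' 0 = 0 ∧
  Filter.Tendsto y Filter.atTop (nhds 0)

/-- The right hand side `g_n = Σ_{k=1}^n (λ_k - s_k D1) y_{n-k} - F y_{n-1}`. -/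
def Gseq (D1 : ℝ → Fin 3 → ℝ) (F : ℝ → Fin 3 → Fin 3 → ℝ)
    (lamseq sseq : ℕ → ℝ) (Y : ℕ → ℝ → Fin 3 → ℝ) (n : ℕ) : ℝ → Fin 3 → ℝ :=
  fun x i =>
    (∑ k ∈ Finset.Icc 1 n, (lamseq k - sseq k * D1 x i) * Y (n - k) x i) -
    ∑ j, F x i j * Y (n - 1) x j

/-- `h_n = F y_{n-1} + Σ_{k=1}^{n-1} (s_k D1 - λ_k) y_{n-k}`. -/
def Hseq (D1 : ℝ → Fin 3 → ℝ) (F : ℝ → Fin 3 → Fin 3 → ℝ)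
    (lamseq sseq : ℕ → ℝ) (Y : ℕ → ℝ → Fin 3 → ℝ) (n : ℕ) : ℝ → Fin 3 → ℝ :=
  fun x i =>
    (∑ j, F x i j * Y (n - 1) x j) +
    ∑ k ∈ Finset.Icc 1 (n - 1), (sseq k * D1 x i - lamseq k) * Y (n - k) x i

/-- The L² norm of a real vector function on `(0,∞)`. -/
def vecL2 (f : ℝ → Fin 3 → ℝ) : ℝ :=
  Real.sqrt (∫ x in Set.Ioi (0 : ℝ), ∑ i, (f x i) ^ 2)

/-- The H² norm of a real vector function on `(0,∞)`. -/
def vecH2 (f f' : ℝ → Fin 3 → ℝ) : ℝ :=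
  Real.sqrt ((∫ x in Set.Ioi (0 : ℝ), ∑ i, (f x i) ^ 2) +
    (∫ x in Set.Ioi (0 : ℝ), ∑ i, (f' x i) ^ 2) +
    (∫ x in Set.Ioi (0 : ℝ), ∑ i, (deriv (fun t => f' t i) x) ^ 2))

/-- Lemma 6.3: under assumptions A1, A2, A3, for the recursive construction
`(y_n, λ_n, s_n, γ_n)` of Theorem 6.1 and with the constants `M2, M3` from
Lemma 6.2 and `M = max{M2, M3}`, defining the integer sequence `(P_k)` by
`P_0 = P_1 = 1`, `P_k = P_{k-1} + Σ_{i=1}^{k-1} P_i (P_{k-i} + P_{k-i-1})`,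
one has `‖h_n‖ ≤ M^{2n-2} P_{n-1}` for all `n ≥ 2` and
`‖y_n‖_{H²} ≤ M^{2n-1} P_{n-1}` for all `n ≥ 1`. -/
theorem lemma_6_3_inductive_bounds
    (L s0 lam0 θ0 : ℝ) (hL : 0 < L) (hlam0 : lam0 ∈ Set.Ioo (0 : ℝ) 1)
    (D0 D1 : ℝ → Fin 3 → ℝ) (F : ℝ → Fin 3 → Fin 3 → ℝ)
    (ED : Finset ℝ)
    (hD0sm : ∀ x ∉ (ED : Set ℝ), ContDiffAt ℝ (⊤ : ℕ∞) D0 x)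
    (hD1sm : ∀ x ∉ (ED : Set ℝ), ContDiffAt ℝ (⊤ : ℕ∞) D1 x)
    (hFsm : ∀ x ∉ (ED : Set ℝ), ContDiffAt ℝ (⊤ : ℕ∞) F x)
    (CB : ℝ)
    (hbdd : ∀ x, (∀ i, |D0 x i| ≤ CB ∧ |D1 x i| ≤ CB) ∧ ∀ i j, |F x i j| ≤ CB)
    (hD0L : ∀ x ≥ L, D0 x = ![0, 1, 1])
    (hD1L : ∀ x ≥ L, D1 x = 0)
    (hFL : ∀ x ≥ L, F x = 0)
    (hFsymm : ∀ x i j, F x i j = F x j i)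
    (hFdiag : ∀ x i, F x i i = 0)
    -- assumption A2
    (φ1 φ1' φ2 φ2' : ℝ → ℝ)
    (hφ1 : IsBoundState1D (fun x => D0 x 1) lam0 φ1 φ1')
    (hφ2 : IsBoundState1D (fun x => D0 x 2) lam0 φ2 φ2')
    (hφ1norm : ∫ x in Set.Ioi (0 : ℝ), (φ1 x) ^ 2 = 1)
    (hφ2norm : ∫ x in Set.Ioi (0 : ℝ), (φ2 x) ^ 2 = 1)
    (d11 d22 : ℝ)
    (hd11 : d11 = ∫ x in Set.Ioi (0 : ℝ), D1 x 1 * (φ1 x) ^ 2)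
    (hd22 : d22 = ∫ x in Set.Ioi (0 : ℝ), D1 x 2 * (φ2 x) ^ 2)
    (hA2 : d11 ≠ d22)
    -- assumption A3
    (φ0 φ0' : ℝ → ℝ)
    (hφ0 : Sol1D (fun x => D0 x 0) lam0 (fun _ => 0) φ0 φ0')
    (hφ0L : ∀ x > L, φ0 x = Real.cos (Real.sqrt lam0 * x + θ0 / 2))
    (C1 C2 : ℝ)
    (hC1 : C1 = ∫ x in Set.Ioi (0 : ℝ), φ0 x * (F x 0 2 * φ2 x))
    (hC2 : C2 = -(∫ x in Set.Ioi (0 : ℝ), φ0 x * (F x 0 1 * φ1 x)))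
    (hA3a : C2 ≠ 0) (hA3b : C1 ≠ 0)
    (hA3n : C1 ^ 2 + C2 ^ 2 = 1)
    -- the recursive construction of Theorem 6.1
    (lamseq sseq gamseq : ℕ → ℝ)
    (Y Y' Yp Yp' : ℕ → ℝ → Fin 3 → ℝ)
    (hY0 : ∀ x, Y 0 x = ![0, C1 * φ1 x, C2 * φ2 x])
    (hY0norm : vecL2 (Y 0) = 1)
    (hYsol : ∀ n, 1 ≤ n →
      DiagBVPSol D0 lam0 (Gseq D1 F lamseq sseq Y n) (Y n) (Y' n))
    (hYpsol : ∀ n, 1 ≤ n →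
      DiagBVPSol D0 lam0 (Gseq D1 F lamseq sseq Y n) (Yp n) (Yp' n))
    (hYporth : ∀ n, 1 ≤ n →
      (∫ x in Set.Ioi (0 : ℝ), φ1 x * Yp n x 1) = 0 ∧
      (∫ x in Set.Ioi (0 : ℝ), φ2 x * Yp n x 2) = 0)
    (hdecomp : ∀ n, 1 ≤ n → ∀ x, Y n x = fun i =>
      Yp n x i + gamseq n * (![0, C2 * φ1 x, -(C1 * φ2 x)] : Fin 3 → ℝ) i)
    (hlin : ∀ n, 1 ≤ n →
      C1 * lamseq n - C1 * d11 * sseq n =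
        (∫ x in Set.Ioi (0 : ℝ), φ1 x * Hseq D1 F lamseq sseq Y n x 1) ∧
      C2 * lamseq n - C2 * d22 * sseq n =
        (∫ x in Set.Ioi (0 : ℝ), φ2 x * Hseq D1 F lamseq sseq Y n x 2))
    (hgam : ∀ n, 1 ≤ n →
      gamseq n = ∫ x in Set.Ioi (0 : ℝ),
        φ0 x * Hseq D1 F lamseq sseq Yp (n + 1) x 0)
    -- the constants M1, M2, M3 from Lemma 6.2 and their properties
    (M1 M2 M3 M : ℝ)
    (hM1 : ∀ n, 1 ≤ n →
      vecL2 (Gseq D1 F lamseq sseq Y n) ≤ M1 * vecL2 (Hseq D1 F lamseq sseq Y n))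
    (hM2 : ∀ n, 1 ≤ n →
      vecL2 (Hseq D1 F lamseq sseq Y n) ≤
        M2 * (vecL2 (Y (n - 1)) +
          ∑ i ∈ Finset.Icc 2 (n - 1),
            vecL2 (Y (n - i)) * vecL2 (Hseq D1 F lamseq sseq Y i)))
    (hM3 : ∀ n, 1 ≤ n →
      vecH2 (Y n) (Y' n) ≤
        M3 * (vecL2 (Hseq D1 F lamseq sseq Y n) +
          ∑ i ∈ Finset.Icc 2 (n - 1),
            vecL2 (Hseq D1 F lamseq sseq Y i) *
              vecL2 (Hseq D1 F lamseq sseq Y (n + 1 - i))))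
    (hbase : vecH2 (Y 1) (Y' 1) ≤ M3)
    (hM : M = max M2 M3)
    -- the integer sequence (P_k)
    (P : ℕ → ℕ)
    (hP0 : P 0 = 1) (hP1 : P 1 = 1)
    (hPrec : ∀ k, 2 ≤ k →
      P k = P (k - 1) + ∑ i ∈ Finset.Icc 1 (k - 1), P i * (P (k - i) + P (k - i - 1))) :
    (∀ n, 2 ≤ n →
      vecL2 (Hseq D1 F lamseq sseq Y n) ≤ M ^ (2 * n - 2) * (P (n - 1) : ℝ)) ∧
    (∀ n, 1 ≤ n →
      vecH2 (Y n) (Y' n) ≤ M ^ (2 * n - 1) * (P (n - 1) : ℝ)) := by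

  have intnn : ∀ f : ℝ → Fin 3 → ℝ, 0 ≤ ∫ x in Set.Ioi (0:ℝ), ∑ i, (f x i)^2 :=
    fun f => setIntegral_nonneg measurableSet_Ioi (fun x _ => by positivity)
  have hL2H2 : ∀ (f f' : ℝ → Fin 3 → ℝ), vecL2 f ≤ vecH2 f f' := by
    intro f f'
    apply Real.sqrt_le_sqrt
    have h1 := intnn f'
    have h2 := intnn (fun x i => deriv (fun t => f' t i) x)
    linarith
  have hHnn : ∀ k, (0:ℝ) ≤ vecL2 (Hseq D1 F lamseq sseq Y k) := fun k => Real.sqrt_nonneg _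
  have hYLnn : ∀ k, (0:ℝ) ≤ vecL2 (Y k) := fun k => Real.sqrt_nonneg _
  have hYHnn : ∀ k, (0:ℝ) ≤ vecH2 (Y k) (Y' k) := fun k => Real.sqrt_nonneg _
  have hM2nn : 0 ≤ M2 := by
    have h := hM2 1 le_rfl
    rw [show (1:ℕ)-1 = 0 from rfl, show Finset.Icc 2 0 = (∅ : Finset ℕ) from by decide,
      Finset.sum_empty, hY0norm] at h
    nlinarith [hHnn 1]
  have hM3nn : 0 ≤ M3 := le_trans (hYHnn 1) hbase
  have hM2M : M2 ≤ M := hM ▸ le_max_left _ _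
  have hM3M : M3 ≤ M := hM ▸ le_max_right _ _
  have hMnn : 0 ≤ M := le_trans hM2nn hM2M
  have key : ∀ n : ℕ,
      (2 ≤ n → vecL2 (Hseq D1 F lamseq sseq Y n) ≤ M ^ (2*n-2) * (P (n-1) : ℝ)) ∧
      (1 ≤ n → vecH2 (Y n) (Y' n) ≤ M ^ (2*n-1) * (P (n-1) : ℝ)) := by
    intro n
    induction n using Nat.strong_induction_on with
    | _ n ih =>
      match n, ih with
      | 0, _ => exact ⟨fun h => absurd h (by omega), fun h => absurd h (by omega)⟩
      | 1, _ =>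
        refine ⟨fun h => absurd h (by omega), fun _ => ?_⟩
        norm_num [hP0]
        exact hbase.trans hM3M
      | (n+2), ih =>
        -- Step A : bound on ‖h_{n+2}‖ with coefficient C = P n + Σ P_{n+1-j} P_{j-1}
        have hb1 : vecL2 (Y (n+1)) ≤ M ^ (2*n+1) * (P n : ℝ) := by
          have h := (ih (n+1) (by omega)).2 (by omega)
          rw [show 2*(n+1)-1 = 2*n+1 from by omega, show (n+1)-1 = n from rfl] at h
          exact (hL2H2 _ (Y' (n+1))).trans h
        have hb2 : ∑ j ∈ Finset.Icc 2 (n+1),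
              vecL2 (Y (n+2-j)) * vecL2 (Hseq D1 F lamseq sseq Y j) ≤
            ∑ j ∈ Finset.Icc 2 (n+1), M ^ (2*n+1) * ((P (n+2-j-1) : ℝ) * (P (j-1) : ℝ)) := by
          apply Finset.sum_le_sum
          intro j hj
          simp only [Finset.mem_Icc] at hj
          have hy : vecL2 (Y (n+2-j)) ≤ M ^ (2*(n+2-j)-1) * (P (n+2-j-1) : ℝ) :=
            (hL2H2 _ (Y' (n+2-j))).trans ((ih (n+2-j) (by omega)).2 (by omega))
          have hh : vecL2 (Hseq D1 F lamseq sseq Y j) ≤ M ^ (2*j-2) * (P (j-1) : ℝ) :=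
            (ih j (by omega)).1 (by omega)
          calc vecL2 (Y (n+2-j)) * vecL2 (Hseq D1 F lamseq sseq Y j)
              ≤ (M ^ (2*(n+2-j)-1) * (P (n+2-j-1) : ℝ)) * (M ^ (2*j-2) * (P (j-1) : ℝ)) :=
                mul_le_mul hy hh (hHnn j) (by positivity)
            _ = M ^ (2*n+1) * ((P (n+2-j-1) : ℝ) * (P (j-1) : ℝ)) := by
                rw [show (2*n+1 : ℕ) = (2*(n+2-j)-1) + (2*j-2) from by omega, pow_add]
                ring
        have hbrA : vecL2 (Y (n+1)) + ∑ j ∈ Finset.Icc 2 (n+1),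
              vecL2 (Y (n+2-j)) * vecL2 (Hseq D1 F lamseq sseq Y j) ≤
            M ^ (2*n+1) * ((P n : ℝ) +
              ∑ j ∈ Finset.Icc 2 (n+1), (P (n+2-j-1) : ℝ) * (P (j-1) : ℝ)) := by
          rw [mul_add, Finset.mul_sum]
          exact add_le_add hb1 hb2
        have hA : vecL2 (Hseq D1 F lamseq sseq Y (n+2)) ≤
            M ^ (2*n+2) * ((P n : ℝ) +
              ∑ j ∈ Finset.Icc 2 (n+1), (P (n+2-j-1) : ℝ) * (P (j-1) : ℝ)) := by
          have h := hM2 (n+2) (by omega)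
          rw [show (n+2)-1 = n+1 from rfl] at h
          calc vecL2 (Hseq D1 F lamseq sseq Y (n+2))
              ≤ M2 * (vecL2 (Y (n+1)) + ∑ j ∈ Finset.Icc 2 (n+1),
                  vecL2 (Y (n+2-j)) * vecL2 (Hseq D1 F lamseq sseq Y j)) := h
            _ ≤ M2 * (M ^ (2*n+1) * ((P n : ℝ) +
                  ∑ j ∈ Finset.Icc 2 (n+1), (P (n+2-j-1) : ℝ) * (P (j-1) : ℝ))) :=
                mul_le_mul_of_nonneg_left hbrA hM2nn
            _ ≤ M * (M ^ (2*n+1) * ((P n : ℝ) +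
                  ∑ j ∈ Finset.Icc 2 (n+1), (P (n+2-j-1) : ℝ) * (P (j-1) : ℝ))) :=
                mul_le_mul_of_nonneg_right hM2M (by positivity)
            _ = M ^ (2*n+2) * ((P n : ℝ) +
                  ∑ j ∈ Finset.Icc 2 (n+1), (P (n+2-j-1) : ℝ) * (P (j-1) : ℝ)) := by
                rw [show (2*n+2:ℕ) = (2*n+1)+1 from by omega, pow_succ]
                ring
        -- Step B : the natural-number identity from the P recurrence
        have hre : Finset.Icc 2 (n+1) = (Finset.Icc 1 n).map
            ⟨fun i => i+1, add_left_injective 1⟩ := by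
          ext j
          simp only [Finset.mem_Icc, Finset.mem_map, Function.Embedding.coeFn_mk]
          constructor
          · intro h; exact ⟨j-1, by omega, by omega⟩
          · rintro ⟨i, hi, rfl⟩; omega
        have hPid : P n + ((∑ j ∈ Finset.Icc 2 (n+1), P (n+2-j-1) * P (j-1)) +
            ∑ j ∈ Finset.Icc 2 (n+1), P (j-1) * P (n+2-j)) = P (n+1) := by
          rcases Nat.eq_zero_or_pos n with rfl | hn0
          · rw [show Finset.Icc 2 (0+1) = (∅:Finset ℕ) from by decide]
            simp [hP0, hP1]
          · rw [hPrec (n+1) (by omega), show (n+1)-1 = n from rfl,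
              ← Finset.sum_add_distrib, hre]
            simp only [Finset.sum_map, Function.Embedding.coeFn_mk]
            congr 1
            apply Finset.sum_congr rfl
            intro i hi
            simp only [Finset.mem_Icc] at hi
            rw [show n+2-(i+1)-1 = n-i from by omega, show i+1-1 = i from rfl,
              show n+2-(i+1) = n+1-i from by omega, show n+1-i-1 = n-i from by omega]
            ring
        have hPidR : (P n : ℝ) + ((∑ j ∈ Finset.Icc 2 (n+1), (P (n+2-j-1):ℝ) * (P (j-1):ℝ)) +
            ∑ j ∈ Finset.Icc 2 (n+1), (P (j-1):ℝ) * (P (n+2-j):ℝ)) = (P (n+1) : ℝ) := by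
          exact_mod_cast congrArg (Nat.cast : ℕ → ℝ) hPid
        -- Step C : bound on ‖y_{n+2}‖_{H²}
        have hb3 : ∑ j ∈ Finset.Icc 2 (n+1),
              vecL2 (Hseq D1 F lamseq sseq Y j) * vecL2 (Hseq D1 F lamseq sseq Y (n+2+1-j)) ≤
            ∑ j ∈ Finset.Icc 2 (n+1), M ^ (2*n+2) * ((P (j-1) : ℝ) * (P (n+2-j) : ℝ)) := by
          apply Finset.sum_le_sum
          intro j hj
          simp only [Finset.mem_Icc] at hj
          have h1 : vecL2 (Hseq D1 F lamseq sseq Y j) ≤ M ^ (2*j-2) * (P (j-1) : ℝ) :=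
            (ih j (by omega)).1 (by omega)
          have h2 : vecL2 (Hseq D1 F lamseq sseq Y (n+2+1-j)) ≤
              M ^ (2*(n+2+1-j)-2) * (P (n+2-j) : ℝ) := by
            have h := (ih (n+2+1-j) (by omega)).1 (by omega)
            rwa [show n+2+1-j-1 = n+2-j from by omega] at h
          calc vecL2 (Hseq D1 F lamseq sseq Y j) * vecL2 (Hseq D1 F lamseq sseq Y (n+2+1-j))
              ≤ (M ^ (2*j-2) * (P (j-1):ℝ)) * (M ^ (2*(n+2+1-j)-2) * (P (n+2-j):ℝ)) :=
                mul_le_mul h1 h2 (hHnn _) (by positivity)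
            _ = M ^ (2*n+2) * ((P (j-1):ℝ) * (P (n+2-j):ℝ)) := by
                rw [show (2*n+2 : ℕ) = (2*j-2) + (2*(n+2+1-j)-2) from by omega, pow_add]
                ring
        have hbrC : vecL2 (Hseq D1 F lamseq sseq Y (n+2)) + ∑ j ∈ Finset.Icc 2 (n+1),
              vecL2 (Hseq D1 F lamseq sseq Y j) * vecL2 (Hseq D1 F lamseq sseq Y (n+2+1-j)) ≤
            M ^ (2*n+2) * (P (n+1) : ℝ) := by
          calc vecL2 (Hseq D1 F lamseq sseq Y (n+2)) + ∑ j ∈ Finset.Icc 2 (n+1),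
                vecL2 (Hseq D1 F lamseq sseq Y j) * vecL2 (Hseq D1 F lamseq sseq Y (n+2+1-j))
              ≤ M ^ (2*n+2) * ((P n : ℝ) +
                  ∑ j ∈ Finset.Icc 2 (n+1), (P (n+2-j-1) : ℝ) * (P (j-1) : ℝ)) +
                ∑ j ∈ Finset.Icc 2 (n+1), M ^ (2*n+2) * ((P (j-1) : ℝ) * (P (n+2-j) : ℝ)) :=
                add_le_add hA hb3
            _ = M ^ (2*n+2) * (((P n : ℝ) +
                  ∑ j ∈ Finset.Icc 2 (n+1), (P (n+2-j-1) : ℝ) * (P (j-1) : ℝ)) +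
                  ∑ j ∈ Finset.Icc 2 (n+1), (P (j-1) : ℝ) * (P (n+2-j) : ℝ)) := by
                rw [← Finset.mul_sum]; ring
            _ = M ^ (2*n+2) * (P (n+1) : ℝ) := by rw [← hPidR]; ring
        have hC : vecH2 (Y (n+2)) (Y' (n+2)) ≤ M ^ (2*n+3) * (P (n+1) : ℝ) := by
          have h := hM3 (n+2) (by omega)
          rw [show (n+2)-1 = n+1 from rfl] at h
          calc vecH2 (Y (n+2)) (Y' (n+2))
              ≤ M3 * (vecL2 (Hseq D1 F lamseq sseq Y (n+2)) + ∑ j ∈ Finset.Icc 2 (n+1),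
                  vecL2 (Hseq D1 F lamseq sseq Y j) *
                    vecL2 (Hseq D1 F lamseq sseq Y (n+2+1-j))) := h
            _ ≤ M3 * (M ^ (2*n+2) * (P (n+1) : ℝ)) := mul_le_mul_of_nonneg_left hbrC hM3nn
            _ ≤ M * (M ^ (2*n+2) * (P (n+1) : ℝ)) :=
                mul_le_mul_of_nonneg_right hM3M (by positivity)
            _ = M ^ (2*n+3) * (P (n+1) : ℝ) := by
                rw [show (2*n+3:ℕ) = (2*n+2)+1 from by omega, pow_succ]
                ring
        constructor
        · intro _
          rw [show 2*(n+2)-2 = 2*n+2 from by omega, show (n+2)-1 = n+1 from rfl]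
          refine hA.trans (mul_le_mul_of_nonneg_left ?_ (by positivity))
          have hnn2 : (0:ℝ) ≤ ∑ j ∈ Finset.Icc 2 (n+1), (P (j-1):ℝ) * (P (n+2-j):ℝ) :=
            Finset.sum_nonneg fun j _ => by positivity
          linarith [hPidR]
        · intro _
          rw [show 2*(n+2)-1 = 2*n+3 from by omega, show (n+2)-1 = n+1 from rfl]
          exact hC
  exact ⟨fun n hn => (key n).1 hn, fun n hn => (key n).2 hn⟩

end
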